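/- arXiv:2005.01825 — 2 statements merged into one kernel-verified Lean document; each statement's English description precedes it below -/
import Mathlib

section
/- Let M_0, M_1, …, M_L be real symmetric ℓ×ℓ matrices. Consider the primal SDP: minimize Tr(M_0 G) over real symmetric positive semidefinite ℓ×ℓ matrices G with Tr(G) = 1 and Tr(M_i G) ≥ 0 for i = 1, …, L; and its dual: maximize ν over ν ∈ ℝ and λ_1, …, λ_L ≥ 0 with M_0 − Σ_{i=1}^L λ_i M_i − ν I positive semidefinite. Assume the primal is feasible and let (ν_*, λ_*) be an optimal solution of the dual; set J := { i : λ_{*,i} > 0 }. If the modified primal SDP — minimize Tr(M_0 G) over positive semidefinite G with Tr(G) = 1 and Tr(M_i G) ≥ 0 only for i ∈ J — has a unique optimal solution G_{*,J}, then G_{*,J} is also an optimal solution of the original primal SDP. -/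
open Matrix

/-- `G` is feasible for the primal SDP with constraint matrices `M i`, `i ∈ J`:
`G ⪰ 0`, `Tr G = 1`, and `Tr (M i * G) ≥ 0` for `i ∈ J`. -/
def PrimalFeasible {ℓ L : ℕ} (M : Fin L → Matrix (Fin ℓ) (Fin ℓ) ℝ)
    (J : Finset (Fin L)) (G : Matrix (Fin ℓ) (Fin ℓ) ℝ) : Prop :=
  G.PosSemidef ∧ G.trace = 1 ∧ ∀ i ∈ J, 0 ≤ (M i * G).trace

/-- `G` is optimal for the primal SDP: it is feasible and minimizes `Tr (M₀ * G)`. -/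
def PrimalOptimal {ℓ L : ℕ} (M₀ : Matrix (Fin ℓ) (Fin ℓ) ℝ)
    (M : Fin L → Matrix (Fin ℓ) (Fin ℓ) ℝ) (J : Finset (Fin L))
    (G : Matrix (Fin ℓ) (Fin ℓ) ℝ) : Prop :=
  PrimalFeasible M J G ∧
    ∀ G' : Matrix (Fin ℓ) (Fin ℓ) ℝ, PrimalFeasible M J G' →
      (M₀ * G).trace ≤ (M₀ * G').trace

/-- `(ν, lam)` is feasible for the dual SDP:
`lam i ≥ 0` for `i ∈ J` and `M₀ - ∑_{i ∈ J} lam i • M i - ν • I ⪰ 0`. -/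
def DualFeasible {ℓ L : ℕ} (M₀ : Matrix (Fin ℓ) (Fin ℓ) ℝ)
    (M : Fin L → Matrix (Fin ℓ) (Fin ℓ) ℝ) (J : Finset (Fin L))
    (ν : ℝ) (lam : Fin L → ℝ) : Prop :=
  (∀ i ∈ J, 0 ≤ lam i) ∧
    (M₀ - (∑ i ∈ J, lam i • M i) - ν • (1 : Matrix (Fin ℓ) (Fin ℓ) ℝ)).PosSemidef

/-- `(ν, lam)` is optimal for the dual SDP: it is feasible and maximizes `ν`. -/
def DualOptimal {ℓ L : ℕ} (M₀ : Matrix (Fin ℓ) (Fin ℓ) ℝ)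
    (M : Fin L → Matrix (Fin ℓ) (Fin ℓ) ℝ) (J : Finset (Fin L))
    (ν : ℝ) (lam : Fin L → ℝ) : Prop :=
  DualFeasible M₀ M J ν lam ∧
    ∀ (ν' : ℝ) (lam' : Fin L → ℝ), DualFeasible M₀ M J ν' lam' → ν' ≤ ν

/-! Since `lam i = 0` off `J`, `(ν, lam)` is also dual feasible for the modified problem, so by weak
duality every `G₀` that is feasible for the original problem with `Tr (M₀ G₀) ≤ ν` is optimal for the
modified one, hence equal to `G`, and then optimal for the original problem, whose feasible set is
smaller. Such a `G₀` exists because there is no duality gap: the constraint set `Tr G = 1, G ⪰ 0`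
is compact and convex, and if `Tr (M₀ G) > ν` on the whole primal feasible set, separating the image
of `G ↦ (Tr (M₀ G), (Tr (M i G))ᵢ)` from the orthant `(-∞, ν] × [0, ∞)ᴸ` yields Lagrange multipliers
beating `ν`; testing them on rank-one matrices `x xᵀ / |x|²` shows they are dual feasible. -/

lemma nonneg_of_forall_lt_add_mul {a b v : ℝ} (h : ∀ t : ℝ, 0 ≤ t → v < a + t * b) : 0 ≤ b := by
  by_contra! hb
  have hav : v < a := by simpa using h 0 le_rfl
  have := h ((a - v) / -b) (div_nonneg (by linarith) (by linarith))
  rw [div_mul_eq_mul_div, div_neg, mul_div_cancel_right₀ _ hb.ne] at this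
  linarith

section Multipliers

variable {E ι : Type*} [AddCommGroup E] [Module ℝ E] [TopologicalSpace E] [Fintype ι]
  {K : Set E} {c : ℝ}

theorem IsCompact.exists_fritzJohn_multipliers (hK : IsCompact K) (hKconv : Convex ℝ K)
    (f₀ : E →L[ℝ] ℝ) (f : ι → E →L[ℝ] ℝ) (hc : ∀ x ∈ K, (∀ i, 0 ≤ f i x) → c < f₀ x) :
    ∃ μ₀ ≥ 0, ∃ μ : ι → ℝ, (∀ i, 0 ≤ μ i) ∧
      ∃ δ > 0, ∀ x ∈ K, δ ≤ μ₀ * (f₀ x - c) - ∑ i, μ i * f i x := by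
  classical
  set φ : E →L[ℝ] ℝ × (ι → ℝ) := f₀.prod (ContinuousLinearMap.pi f)
  have hdisj : Disjoint (φ '' K) (Set.Iic c ×ˢ Set.Ici 0) := by
    rw [Set.disjoint_left]
    rintro _ ⟨x, hx, rfl⟩ ⟨hx₀, hxf⟩
    exact (hc x hx hxf).not_ge hx₀
  obtain ⟨g, u, v, hgK, huv, hgQ⟩ := geometric_hahn_banach_compact_closed
    (hKconv.linear_image φ.toLinearMap) (hK.image φ.continuous)
    ((convex_Iic c).prod (convex_Ici 0)) (isClosed_Iic.prod isClosed_Ici) hdisj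
  set a := g (1, 0)
  set h := g.comp (ContinuousLinearMap.inr ℝ ℝ (ι → ℝ))
  have hg (s : ℝ) (y : ι → ℝ) : g (s, y) = s * a + h y := by
    have hsy : ((s, y) : ℝ × (ι → ℝ)) = s • (1, 0) + (0, y) := by simp
    rw [hsy, map_add, map_smul, smul_eq_mul]
    rfl
  have hQ : ∀ s ≤ c, ∀ y ≥ 0, v < s * a + h y := fun s hs y hy =>
    hg s y ▸ hgQ (s, y) ⟨hs, hy⟩
  have ha : a ≤ 0 := by
    refine neg_nonneg.mp (nonneg_of_forall_lt_add_mul (a := c * a) (v := v) fun t ht => ?_)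
    have := hQ (c - t) (by linarith) 0 le_rfl
    rw [map_zero] at this
    linarith
  have hh : ∀ y ≥ 0, 0 ≤ h y := fun y hy =>
    nonneg_of_forall_lt_add_mul (a := c * a) fun t ht => by
      simpa only [map_smul, smul_eq_mul] using hQ c le_rfl (t • y) (smul_nonneg ht hy)
  have hvc : v < c * a := by simpa using hQ c le_rfl 0 le_rfl
  have hh_apply (y : ι → ℝ) : h y = ∑ i, h (Pi.single i 1) * y i := by
    refine (h.toLinearMap.pi_apply_eq_sum_univ y).trans (Finset.sum_congr rfl fun i _ => ?_)
    have hei : (fun j => if i = j then (1 : ℝ) else 0) = Pi.single i 1 := by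
      ext j
      simp [Pi.single_apply, eq_comm]
    rw [smul_eq_mul, ← hei, mul_comm]
    rfl
  refine ⟨-a, by linarith, fun i => h (Pi.single i 1),
    fun i => hh _ (Pi.single_nonneg.mpr zero_le_one), c * a - u, by linarith, fun x hx => ?_⟩
  have hx : f₀ x * a + h (fun i => f i x) < u := hg _ _ ▸ hgK (φ x) (Set.mem_image_of_mem φ hx)
  rw [hh_apply] at hx
  linarith

theorem IsCompact.exists_lagrange_multipliers (hK : IsCompact K) (hKconv : Convex ℝ K)
    (f₀ : E →L[ℝ] ℝ) (f : ι → E →L[ℝ] ℝ) (hfeas : ∃ x ∈ K, ∀ i, 0 ≤ f i x)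
    (hc : ∀ x ∈ K, (∀ i, 0 ≤ f i x) → c < f₀ x) :
    ∃ μ : ι → ℝ, (∀ i, 0 ≤ μ i) ∧ ∃ c' > c, ∀ x ∈ K, c' ≤ f₀ x - ∑ i, μ i * f i x := by
  obtain ⟨μ₀, hμ₀, μ, hμ, δ, hδ, hKμ⟩ := hK.exists_fritzJohn_multipliers hKconv f₀ f hc
  obtain ⟨x₀, hx₀, hx₀f⟩ := hfeas
  have hμ₀pos : 0 < μ₀ := by
    refine hμ₀.lt_of_ne' fun h0 => ?_
    have hpen : 0 ≤ ∑ i, μ i * f i x₀ :=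
      Finset.sum_nonneg fun i _ => mul_nonneg (hμ i) (hx₀f i)
    have := hKμ x₀ hx₀
    rw [h0, zero_mul, zero_sub] at this
    linarith
  refine ⟨fun i => μ i / μ₀, fun i => div_nonneg (hμ i) hμ₀.le, c + δ / μ₀,
    lt_add_of_pos_right c (div_pos hδ hμ₀pos), fun x hx => ?_⟩
  have hscale : f₀ x - ∑ i, μ i / μ₀ * f i x = c + (μ₀ * (f₀ x - c) - ∑ i, μ i * f i x) / μ₀ := by
    simp_rw [div_mul_eq_mul_div, ← Finset.sum_div]
    field_simp
    ring
  rw [hscale]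
  gcongr
  exact hKμ x hx

end Multipliers

namespace Matrix

variable {n : Type*} [Fintype n]

theorem trace_mul_vecMulVec_self (A : Matrix n n ℝ) (x : n → ℝ) :
    (A * vecMulVec x x).trace = x ⬝ᵥ A *ᵥ x := by
  rw [mul_vecMulVec, trace_vecMulVec, dotProduct_comm]

theorem PosSemidef.trace_mul_nonneg {A B : Matrix n n ℝ} (hA : A.PosSemidef)
    (hB : B.PosSemidef) : 0 ≤ (A * B).trace := by
  obtain ⟨m, v, rfl⟩ := posSemidef_iff_eq_sum_vecMulVec.mp hB
  rw [Matrix.mul_sum, trace_sum]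
  refine Finset.sum_nonneg fun i _ => ?_
  rw [star_trivial, trace_mul_vecMulVec_self]
  simpa using hA.dotProduct_mulVec_nonneg (v i)

theorem PosSemidef.abs_apply_le_trace {A : Matrix n n ℝ} (hA : A.PosSemidef) (i j : n) :
    |A i j| ≤ A.trace := by
  classical
  have hdiag (k : n) : A k k ≤ A.trace :=
    Finset.single_le_sum (f := fun k => A k k) (fun _ _ => hA.diag_nonneg) (Finset.mem_univ k)
  have hform (s : ℝ) : 0 ≤ A i i + s * A i j + s * A j i + s ^ 2 * A j j := by
    have := hA.dotProduct_mulVec_nonneg (Pi.single i 1 + s • Pi.single j 1)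
    simp only [star_trivial, mulVec_add, mulVec_smul, mulVec_single_one, add_dotProduct,
      dotProduct_add, smul_dotProduct, dotProduct_smul, single_one_dotProduct, smul_eq_mul,
      col_apply] at this
    linarith
  have hsymm : A j i = A i j := hA.isHermitian.apply i j
  have hplus := hform 1
  have hminus := hform (-1)
  rw [hsymm] at hplus hminus
  exact abs_le.mpr ⟨by linarith [hdiag i, hdiag j], by linarith [hdiag i, hdiag j]⟩

theorem isClosed_setOf_posSemidef : IsClosed {A : Matrix n n ℝ | A.PosSemidef} := by
  simp_rw [posSemidef_iff_dotProduct_mulVec, Set.ofPred_and, Set.ofPred_forall, IsHermitian]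
  exact (isClosed_eq continuous_id.matrix_conjTranspose continuous_id).inter
    (isClosed_iInter fun x => isClosed_le continuous_const
      (continuous_const.dotProduct (continuous_id.matrix_mulVec continuous_const)))

noncomputable def traceMulCLM (A : Matrix n n ℝ) : Matrix n n ℝ →L[ℝ] ℝ :=
  LinearMap.toContinuousLinearMap (traceLinearMap n ℝ ℝ ∘ₗ LinearMap.mulLeft ℝ A)

@[simp]
theorem traceMulCLM_apply (A G : Matrix n n ℝ) : traceMulCLM A G = (A * G).trace := rfl

end Matrix

def spectraplex (n : Type*) [Fintype n] : Set (Matrix n n ℝ) :=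
  {G | G.PosSemidef ∧ G.trace = 1}

section Spectraplex

variable {n : Type*} [Fintype n]

theorem convex_spectraplex : Convex ℝ (spectraplex n) := by
  rintro G ⟨hG, hGtr⟩ H ⟨hH, hHtr⟩ a b ha hb hab
  exact ⟨(hG.smul ha).add (hH.smul hb), by simp [trace_add, trace_smul, hGtr, hHtr, hab]⟩

theorem isCompact_spectraplex : IsCompact (spectraplex n) := by
  refine (isCompact_univ_pi fun _ => isCompact_univ_pi fun _ => isCompact_Icc
    (a := (-1 : ℝ)) (b := 1)).of_isClosed_subset ?_ ?_
  · exact isClosed_setOf_posSemidef.inter (isClosed_eq continuous_id.matrix_trace continuous_const)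
  · rintro G ⟨hG, htr⟩ i - j -
    exact abs_le.mp (htr ▸ hG.abs_apply_le_trace i j)

theorem posSemidef_sub_smul_one_of_le_trace_mul [DecidableEq n] {A : Matrix n n ℝ}
    (hA : A.IsHermitian) {c : ℝ} (h : ∀ G ∈ spectraplex n, c ≤ (A * G).trace) :
    (A - c • 1).PosSemidef := by
  refine PosSemidef.of_dotProduct_mulVec_nonneg (hA.sub (isHermitian_one.smul (.all c)))
    fun x => ?_
  rw [star_trivial, sub_mulVec, dotProduct_sub, smul_mulVec, one_mulVec, dotProduct_smul,
    smul_eq_mul, sub_nonneg]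
  rcases eq_or_ne x 0 with rfl | hx
  · simp
  have hxx : 0 < x ⬝ᵥ x := by simpa using dotProduct_self_star_pos_iff.mpr hx
  have hG : (x ⬝ᵥ x)⁻¹ • vecMulVec x x ∈ spectraplex n := by
    refine ⟨?_, by rw [trace_smul, trace_vecMulVec, smul_eq_mul, inv_mul_cancel₀ hxx.ne']⟩
    simpa using (posSemidef_vecMulVec_self_star x).smul (inv_nonneg.mpr hxx.le)
  have := h _ hG
  rwa [Matrix.mul_smul, trace_smul, trace_mul_vecMulVec_self, smul_eq_mul, le_inv_mul_iff₀ hxx,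
    mul_comm] at this

end Spectraplex

section SDP

variable {ℓ L : ℕ} {M₀ : Matrix (Fin ℓ) (Fin ℓ) ℝ} {M : Fin L → Matrix (Fin ℓ) (Fin ℓ) ℝ}
  {J J' : Finset (Fin L)} {ν : ℝ} {lam : Fin L → ℝ} {G : Matrix (Fin ℓ) (Fin ℓ) ℝ}

theorem PrimalFeasible.mono (hG : PrimalFeasible M J' G) (hJ : J ⊆ J') :
    PrimalFeasible M J G :=
  ⟨hG.1, hG.2.1, fun i hi => hG.2.2 i (hJ hi)⟩

theorem DualFeasible.of_superset (hd : DualFeasible M₀ M J' ν lam) (hJ : J ⊆ J')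
    (hlam : ∀ i ∈ J', i ∉ J → lam i = 0) : DualFeasible M₀ M J ν lam := by
  refine ⟨fun i hi => hd.1 i (hJ hi), ?_⟩
  rw [Finset.sum_subset hJ fun i hi hiJ => by rw [hlam i hi hiJ, zero_smul]]
  exact hd.2

theorem DualFeasible.le_trace_mul (hd : DualFeasible M₀ M J ν lam)
    (hG : PrimalFeasible M J G) : ν ≤ (M₀ * G).trace := by
  have hgap := hd.2.trace_mul_nonneg hG.1
  simp only [sub_mul, Finset.sum_mul, smul_mul_assoc, Matrix.one_mul, trace_sub, trace_sum,
    trace_smul, smul_eq_mul, hG.2.1, mul_one] at hgap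
  have hpen : 0 ≤ ∑ i ∈ J, lam i * (M i * G).trace :=
    Finset.sum_nonneg fun i hi => mul_nonneg (hd.1 i hi) (hG.2.2 i hi)
  linarith

theorem exists_dualFeasible_gt_of_forall_lt (hM₀ : M₀.IsSymm) (hM : ∀ i, (M i).IsSymm)
    (hfeas : ∃ G, PrimalFeasible M Finset.univ G) {c : ℝ}
    (hc : ∀ G, PrimalFeasible M Finset.univ G → c < (M₀ * G).trace) :
    ∃ ν lam, DualFeasible M₀ M Finset.univ ν lam ∧ c < ν := by
  obtain ⟨μ, hμ, c', hcc', hc'⟩ := isCompact_spectraplex.exists_lagrange_multipliers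
    convex_spectraplex (traceMulCLM M₀) (fun i => traceMulCLM (M i))
    (by
      obtain ⟨G, hG, htr, hMG⟩ := hfeas
      exact ⟨G, ⟨hG, htr⟩, fun i => hMG i (Finset.mem_univ i)⟩)
    (fun G ⟨hG, htr⟩ hMG => hc G ⟨hG, htr, fun i _ => hMG i⟩)
  have hherm : (M₀ - ∑ i, μ i • M i).IsHermitian :=
    (isHermitian_iff_isSymm.mpr hM₀).sub (isSelfAdjoint_sum (x := fun i => μ i • M i) _
      fun i _ => (isHermitian_iff_isSymm.mpr (hM i)).smul (.all _))
  refine ⟨c', μ, ⟨fun i _ => hμ i, posSemidef_sub_smul_one_of_le_trace_mul hherm fun G hG => ?_⟩,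
    hcc'⟩
  simpa only [sub_mul, Finset.sum_mul, smul_mul_assoc, trace_sub, trace_sum, trace_smul,
    smul_eq_mul, traceMulCLM_apply] using hc' G hG

end SDP

theorem modified_primal_solution_solves_primal_general
    {ℓ L : ℕ}
    (M₀ : Matrix (Fin ℓ) (Fin ℓ) ℝ) (M : Fin L → Matrix (Fin ℓ) (Fin ℓ) ℝ)
    (hM₀ : M₀.IsSymm) (hM : ∀ i, (M i).IsSymm)
    (hfeas : ∃ G, PrimalFeasible M Finset.univ G)
    (ν : ℝ) (lam : Fin L → ℝ)
    (hdual : DualOptimal M₀ M Finset.univ ν lam)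
    (J : Finset (Fin L)) (hJ : J = Finset.univ.filter (fun i => 0 < lam i))
    (G : Matrix (Fin ℓ) (Fin ℓ) ℝ)
    (huniq : ∀ G', PrimalOptimal M₀ M J G' → G' = G) :
    PrimalOptimal M₀ M Finset.univ G := by
  obtain ⟨hdual_feas, hdual_max⟩ := hdual
  have hdualJ : DualFeasible M₀ M J ν lam :=
    hdual_feas.of_superset (Finset.subset_univ J) fun i hi hiJ =>
      ((hdual_feas.1 i hi).eq_of_not_lt (by simpa [hJ] using hiJ)).symm
  obtain ⟨G₀, hG₀, hG₀ν⟩ : ∃ G₀, PrimalFeasible M Finset.univ G₀ ∧ (M₀ * G₀).trace ≤ ν := by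
    by_contra! h
    obtain ⟨ν', lam', hfeas', hν'⟩ := exists_dualFeasible_gt_of_forall_lt hM₀ hM hfeas h
    exact (hdual_max ν' lam' hfeas').not_gt hν'
  have hG₀J : PrimalOptimal M₀ M J G₀ :=
    ⟨hG₀.mono (Finset.subset_univ J), fun G' hG' => hG₀ν.trans (hdualJ.le_trace_mul hG')⟩
  obtain rfl := huniq G₀ hG₀J
  exact ⟨hG₀, fun G' hG' => hG₀J.2 G' (hG'.mono (Finset.subset_univ J))⟩

theorem modified_primal_solution_solves_primal
    {ℓ L : ℕ}
    (M₀ : Matrix (Fin ℓ) (Fin ℓ) ℝ) (M : Fin L → Matrix (Fin ℓ) (Fin ℓ) ℝ)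
    (hM₀ : M₀.IsSymm) (hM : ∀ i, (M i).IsSymm)
    (hfeas : ∃ G, PrimalFeasible M Finset.univ G)
    (ν : ℝ) (lam : Fin L → ℝ)
    (hdual : DualOptimal M₀ M Finset.univ ν lam)
    (J : Finset (Fin L)) (hJ : J = Finset.univ.filter (fun i => 0 < lam i))
    (G : Matrix (Fin ℓ) (Fin ℓ) ℝ)
    (hGopt : PrimalOptimal M₀ M J G)
    (huniq : ∀ G', PrimalOptimal M₀ M J G' → G' = G) :
    PrimalOptimal M₀ M Finset.univ G :=
  modified_primal_solution_solves_primal_general M₀ M hM₀ hM hfeas ν lam hdual J hJ G huniq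
end

section
/- Let 0 < m < L < ∞, let f : ℝ^d → ℝ be m-strongly convex and differentiable with L-Lipschitz gradient, and suppose ∇f(0) = 0. Let y_0, …, y_{N−1} ∈ ℝ^d, set u_i := ∇f(y_i), and let Y, U ∈ ℝ^{Nd} be the stacked vectors Y := (y_0ᵀ, …, y_{N−1}ᵀ)ᵀ and U := (u_0ᵀ, …, u_{N−1}ᵀ)ᵀ. Then for every N×N doubly hyperdominant matrix H, (L Y − U)ᵀ (H ⊗ I_d) (U − m Y) ≥ 0. -/
open Matrix Kronecker

/-- `f` is `m`-strongly convex: `y ↦ f y - m/2 ‖y‖²` is convex. -/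
def StronglyConvexFun {d : ℕ} (m : ℝ) (f : EuclideanSpace ℝ (Fin d) → ℝ) : Prop :=
  ConvexOn ℝ Set.univ (fun y => f y - m / 2 * ‖y‖ ^ 2)

/-- A real square matrix is doubly hyperdominant if its off-diagonal entries are
nonpositive and all row and column sums are nonnegative. -/
def IsDoublyHyperdominant {R : ℕ} (H : Matrix (Fin R) (Fin R) ℝ) : Prop :=
  (∀ i j, i ≠ j → H i j ≤ 0) ∧ (∀ i, 0 ≤ ∑ j, H i j) ∧ (∀ j, 0 ≤ ∑ i, H i j)

/-!
Put `g := f - m/2‖·‖²`, `φ := ∇g` and `ℓ := L - m`. Then `g` is convex and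
`⟪φ y - φ x, y - x⟫ ≤ ℓ‖y - x‖²`, which gives the interpolation inequality
`g x ≥ g z + ⟪φ z, x - z⟫ + ‖φ x - φ z‖² / (2ℓ)` between any two points. Since `φ 0 = 0`, the
`(i, j)` block `⟪ℓ yᵢ - φ yᵢ, φ yⱼ⟫` of the quadratic form equals `Q(yᵢ, 0) + Q(0, yⱼ) - Q(yᵢ, yⱼ)`,
where `Q ≥ 0` is the slack of that inequality and vanishes on the diagonal. Nonnegative row and
column sums of `H` handle the first two terms, nonpositive off-diagonal entries the last.
-/

open InnerProductSpace

section Interpolation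

variable {E : Type*} [NormedAddCommGroup E] [InnerProductSpace ℝ E]

/-- `ℓ` times the slack in the interpolation inequality for convex functions with
`ℓ`-Lipschitz gradient, `g x ≥ g z + ⟪φ z, x - z⟫ + ‖φ x - φ z‖² / (2ℓ)`. -/
noncomputable def interpolationGap (ℓ : ℝ) (g : E → ℝ) (φ : E → E) (x z : E) : ℝ :=
  ℓ * (g x - g z - ⟪φ z, x - z⟫_ℝ) - ‖φ x - φ z‖ ^ 2 / 2

@[simp]
lemma interpolationGap_self (ℓ : ℝ) (g : E → ℝ) (φ : E → E) (x : E) :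
    interpolationGap ℓ g φ x x = 0 := by
  simp [interpolationGap]

lemma inner_smul_sub_eq_interpolationGap (ℓ : ℝ) (g : E → ℝ) {φ : E → E} (hφ : φ 0 = 0)
    (x z : E) :
    ⟪ℓ • x - φ x, φ z⟫_ℝ = interpolationGap ℓ g φ x 0 + interpolationGap ℓ g φ 0 z
      - interpolationGap ℓ g φ x z := by
  simp only [interpolationGap, hφ, sub_zero, zero_sub, inner_zero_left, inner_neg_right,
    norm_neg, norm_sub_sq_real, inner_sub_left, inner_sub_right, real_inner_smul_left,
    real_inner_comm x (φ z)]
  ring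

lemma inner_sub_smul_sub_le_of_norm_sub_le {ψ : E → E} {L : ℝ}
    (hψ : ∀ x y, ‖ψ y - ψ x‖ ≤ L * ‖y - x‖) (m : ℝ) (x y : E) :
    ⟪(ψ y - m • y) - (ψ x - m • x), y - x⟫_ℝ ≤ (L - m) * ‖y - x‖ ^ 2 := by
  have hcs := (real_inner_le_norm (ψ y - ψ x) (y - x)).trans
    (mul_le_mul_of_nonneg_right (hψ x y) (norm_nonneg _))
  have hsplit : (ψ y - m • y) - (ψ x - m • x) = (ψ y - ψ x) - m • (y - x) := by
    rw [smul_sub]; abel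
  rw [hsplit, inner_sub_left, real_inner_smul_left, real_inner_self_eq_norm_sq]
  linarith

variable [CompleteSpace E] {g : E → ℝ} {φ : E → E}

lemma HasGradientAt.hasDerivAt_comp_add_smul {G a v : E} {t : ℝ}
    (h : HasGradientAt g G (a + t • v)) :
    HasDerivAt (fun s : ℝ => g (a + s • v)) ⟪G, v⟫_ℝ t := by
  have hline : HasDerivAt (fun s : ℝ => a + s • v) v t :=
    ((hasDerivAt_id t).smul_const v).const_add a |>.congr_deriv (one_smul ℝ v)
  have := h.hasFDerivAt.comp_hasDerivAt t hline
  rwa [toDual_apply_apply] at this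

lemma HasGradientAt.sub_half_mul_norm_sq {f : E → ℝ} {G x : E} (hf : HasGradientAt f G x)
    (m : ℝ) : HasGradientAt (fun y => f y - m / 2 * ‖y‖ ^ 2) (G - m • x) x := by
  rw [hasGradientAt_iff_hasFDerivAt] at hf ⊢
  refine (hf.sub ((hasStrictFDerivAt_norm_sq x).hasFDerivAt.const_mul (m / 2))).congr_fderiv ?_
  ext w
  simp [toDual_apply_apply]
  ring

lemma ConvexOn.add_inner_le_of_hasGradientAt (hg : ConvexOn ℝ Set.univ g) {G z : E}
    (hG : HasGradientAt g G z) (w : E) : g z + ⟪G, w - z⟫_ℝ ≤ g w := by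
  have hline : ConvexOn ℝ Set.univ (fun t : ℝ => g (z + t • (w - z))) := by
    simpa [Function.comp_def, AffineMap.lineMap_apply_module', add_comm] using
      hg.comp_affineMap (AffineMap.lineMap z w)
  have hderiv := (show HasGradientAt g G (z + (0 : ℝ) • (w - z)) by simpa using hG)
    |>.hasDerivAt_comp_add_smul
  have hslope := hline.le_slope_of_hasDerivAt (Set.mem_univ 0) (Set.mem_univ 1) one_pos hderiv
  simp only [slope_def_field, one_smul, add_sub_cancel, zero_smul, add_zero, sub_zero,
    div_one] at hslope
  linarith

lemma le_add_inner_add_sq_of_inner_sub_le (hφ : ∀ x, HasGradientAt g (φ x) x) {ℓ : ℝ}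
    (hsmooth : ∀ x y, ⟪φ y - φ x, y - x⟫_ℝ ≤ ℓ * ‖y - x‖ ^ 2) (a b : E) :
    g b ≤ g a + ⟪φ a, b - a⟫_ℝ + ℓ / 2 * ‖b - a‖ ^ 2 := by
  set v := b - a
  set h : ℝ → ℝ := fun t => g (a + t • v) - t * ⟪φ a, v⟫_ℝ - ℓ / 2 * t ^ 2 * ‖v‖ ^ 2
  have hderiv (t : ℝ) : HasDerivAt h (⟪φ (a + t • v) - φ a, v⟫_ℝ - ℓ * t * ‖v‖ ^ 2) t := by
    refine ((((hφ (a + t • v)).hasDerivAt_comp_add_smul).sub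
      ((hasDerivAt_id t).mul_const ⟪φ a, v⟫_ℝ)).sub
      (((hasDerivAt_pow 2 t).const_mul (ℓ / 2)).mul_const (‖v‖ ^ 2))).congr_deriv ?_
    simp only [inner_sub_left]
    ring
  have hanti : AntitoneOn h (Set.Ici 0) := by
    refine antitoneOn_of_hasDerivWithinAt_nonpos (convex_Ici 0)
      (fun t _ => (hderiv t).continuousAt.continuousWithinAt)
      (fun t _ => (hderiv t).hasDerivWithinAt) fun t ht => ?_
    rw [interior_Ici, Set.mem_Ioi] at ht
    have := hsmooth a (a + t • v)
    simp only [add_sub_cancel_left, inner_smul_right, norm_smul, Real.norm_of_nonneg ht.le] at this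
    nlinarith
  have h10 : h 1 ≤ h 0 := hanti Set.self_mem_Ici (Set.mem_Ici.mpr zero_le_one) zero_le_one
  simp only [h, v, one_smul, zero_smul, add_zero, one_mul, one_pow, mul_one, zero_mul, sub_zero,
    ne_eq, OfNat.ofNat_ne_zero, not_false_eq_true, zero_pow, mul_zero, add_sub_cancel] at h10
  linarith

lemma interpolationGap_nonneg {ℓ : ℝ} (hg : ConvexOn ℝ Set.univ g)
    (hφ : ∀ x, HasGradientAt g (φ x) x)
    (hsmooth : ∀ x y, ⟪φ y - φ x, y - x⟫_ℝ ≤ ℓ * ‖y - x‖ ^ 2) (hℓ : 0 < ℓ) (x z : E) :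
    0 ≤ interpolationGap ℓ g φ x z := by
  -- compare the tangent planes at `z` and `x` at the point `w` reached by a gradient step from `x`
  set Δ := φ x - φ z
  set w := x - ℓ⁻¹ • Δ
  have hlower := hg.add_inner_le_of_hasGradientAt (hφ z) w
  have hupper := le_add_inner_add_sq_of_inner_sub_le hφ hsmooth x w
  have hwx : w - x = -(ℓ⁻¹ • Δ) := by simp [w]
  have hwz : w - z = (x - z) - ℓ⁻¹ • Δ := by simp only [w]; abel
  rw [hwz, inner_sub_right, real_inner_smul_right] at hlower
  rw [hwx, inner_neg_right, real_inner_smul_right, norm_neg, norm_smul,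
    Real.norm_of_nonneg (inv_nonneg.mpr hℓ.le)] at hupper
  have hΔ : ℓ⁻¹ * ⟪φ x, Δ⟫_ℝ - ℓ⁻¹ * ⟪φ z, Δ⟫_ℝ = ℓ⁻¹ * ‖Δ‖ ^ 2 := by
    rw [← mul_sub, ← inner_sub_left, real_inner_self_eq_norm_sq]
  have hsq : ℓ / 2 * (ℓ⁻¹ * ‖Δ‖) ^ 2 = ℓ⁻¹ * ‖Δ‖ ^ 2 / 2 := by field_simp
  have hgap : ℓ⁻¹ * ‖Δ‖ ^ 2 / 2 ≤ g x - g z - ⟪φ z, x - z⟫_ℝ := by linarith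
  have hscaled := mul_le_mul_of_nonneg_left hgap hℓ.le
  rw [show ℓ * (ℓ⁻¹ * ‖Δ‖ ^ 2 / 2) = ‖Δ‖ ^ 2 / 2 by field_simp] at hscaled
  unfold interpolationGap
  linarith

end Interpolation

lemma IsDoublyHyperdominant.sum_mul_add_sub_nonneg {N : ℕ} {H : Matrix (Fin N) (Fin N) ℝ}
    (hH : IsDoublyHyperdominant H) {a b : Fin N → ℝ} {c : Fin N → Fin N → ℝ}
    (ha : ∀ i, 0 ≤ a i) (hb : ∀ j, 0 ≤ b j) (hc : ∀ i j, 0 ≤ c i j) (hc_diag : ∀ i, c i i = 0) :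
    0 ≤ ∑ i, ∑ j, H i j * (a i + b j - c i j) := by
  obtain ⟨hoff, hrow, hcol⟩ := hH
  have hsplit : ∑ i, ∑ j, H i j * (a i + b j)
      = ∑ i, (∑ j, H i j) * a i + ∑ j, (∑ i, H i j) * b j := by
    simp only [mul_add, Finset.sum_add_distrib, Finset.sum_mul]
    rw [Finset.sum_comm (f := fun i j => H i j * b j)]
  have hmain : 0 ≤ ∑ i, ∑ j, H i j * (a i + b j) := by
    rw [hsplit]
    exact add_nonneg (Finset.sum_nonneg fun i _ => mul_nonneg (hrow i) (ha i))
      (Finset.sum_nonneg fun j _ => mul_nonneg (hcol j) (hb j))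
  have hterm (i j : Fin N) : H i j * (a i + b j) ≤ H i j * (a i + b j - c i j) := by
    rcases eq_or_ne i j with rfl | hij
    · simp [hc_diag]
    · exact mul_le_mul_of_nonpos_left (by linarith [hc i j]) (hoff i j hij)
  exact hmain.trans (Finset.sum_le_sum fun i _ => Finset.sum_le_sum fun j _ => hterm i j)

lemma dotProduct_kronecker_one_mulVec {ι κ : Type*} [Fintype ι] [Fintype κ] [DecidableEq κ]
    (H : Matrix ι ι ℝ) (x z : ι → EuclideanSpace ℝ κ) :
    (fun p : ι × κ => x p.1 p.2) ⬝ᵥ ((H ⊗ₖ (1 : Matrix κ κ ℝ)) *ᵥ fun p => z p.1 p.2)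
      = ∑ i, ∑ j, H i j * ⟪x i, z j⟫_ℝ := by
  simp only [dotProduct, mulVec, Fintype.sum_prod_type, kroneckerMap_apply, one_apply,
    mul_ite, mul_one, mul_zero, ite_mul, zero_mul, Finset.sum_ite_eq, Finset.mem_univ, if_true,
    PiLp.inner_apply, RCLike.inner_apply, conj_trivial, Finset.mul_sum]
  refine Finset.sum_congr rfl fun i _ => ?_
  rw [Finset.sum_comm]
  exact Finset.sum_congr rfl fun j _ => Finset.sum_congr rfl fun k _ => by ring

theorem dhd_quadratic_constraint_nonneg_general
    {d N : ℕ} (m L : ℝ) (hmL : m < L)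
    (f : EuclideanSpace ℝ (Fin d) → ℝ)
    (hconv : StronglyConvexFun m f) (hdiff : Differentiable ℝ f)
    (hLip : ∀ y₁ y₂, ‖gradient f y₂ - gradient f y₁‖ ≤ L * ‖y₂ - y₁‖)
    (hopt : gradient f 0 = 0)
    (y u : Fin N → EuclideanSpace ℝ (Fin d)) (hu : ∀ i, u i = gradient f (y i))
    (Y U : Fin N × Fin d → ℝ)
    (hY : ∀ p, Y p = y p.1 p.2) (hU : ∀ p, U p = u p.1 p.2)
    (H : Matrix (Fin N) (Fin N) ℝ) (hH : IsDoublyHyperdominant H) :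
    0 ≤ (L • Y - U) ⬝ᵥ ((H ⊗ₖ (1 : Matrix (Fin d) (Fin d) ℝ)).mulVec (U - m • Y)) := by
  set g := fun x => f x - m / 2 * ‖x‖ ^ 2
  set φ := fun x => gradient f x - m • x
  have hφ (x) : HasGradientAt g (φ x) x := (hdiff x).hasGradientAt.sub_half_mul_norm_sq m
  have hgap := interpolationGap_nonneg hconv hφ (inner_sub_smul_sub_le_of_norm_sub_le hLip m)
    (sub_pos.mpr hmL)
  have hφ0 : φ 0 = 0 := by simp [φ, hopt]
  have hLY : L • Y - U = fun p => ((L - m) • y p.1 - φ (y p.1)) p.2 := by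
    funext p
    simp only [Pi.sub_apply, Pi.smul_apply, hY, smul_eq_mul, hU, hu, PiLp.sub_apply,
      PiLp.smul_apply, φ]
    ring
  have hUY : U - m • Y = fun p => φ (y p.1) p.2 := by
    funext p; simp [hY, hU, hu, φ]
  rw [hLY, hUY,
    dotProduct_kronecker_one_mulVec H (fun i => (L - m) • y i - φ (y i)) (fun j => φ (y j))]
  simp only [inner_smul_sub_eq_interpolationGap (L - m) g hφ0]
  exact hH.sum_mul_add_sub_nonneg (fun _ => hgap _ _) (fun _ => hgap _ _) (fun _ _ => hgap _ _)
    fun _ => interpolationGap_self ..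

theorem dhd_quadratic_constraint_nonneg
    {d N : ℕ} (m L : ℝ) (hm : 0 < m) (hmL : m < L)
    (f : EuclideanSpace ℝ (Fin d) → ℝ)
    (hconv : StronglyConvexFun m f) (hdiff : Differentiable ℝ f)
    (hLip : ∀ y₁ y₂, ‖gradient f y₂ - gradient f y₁‖ ≤ L * ‖y₂ - y₁‖)
    (hopt : gradient f 0 = 0)
    (y u : Fin N → EuclideanSpace ℝ (Fin d)) (hu : ∀ i, u i = gradient f (y i))
    (Y U : Fin N × Fin d → ℝ)
    (hY : ∀ p, Y p = y p.1 p.2) (hU : ∀ p, U p = u p.1 p.2)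
    (H : Matrix (Fin N) (Fin N) ℝ) (hH : IsDoublyHyperdominant H) :
    0 ≤ (L • Y - U) ⬝ᵥ ((H ⊗ₖ (1 : Matrix (Fin d) (Fin d) ℝ)).mulVec (U - m • Y)) :=
  dhd_quadratic_constraint_nonneg_general m L hmL f hconv hdiff hLip hopt y u hu Y U hY hU H hH
end
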